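/- arXiv:1312.5873 — 2 statements merged into one kernel-verified Lean document; each statement's English description precedes it below -/
import Mathlib

section
/- Let f(x) = x^T Q x where Q is a real symmetric n×n matrix and let r ≥ 2 be an integer. Then f̲ − f_min^{(r−2)} ≤ (1/(r−1)) (f̄ − f̲). -/
open Finset

noncomputable section

/-- Falling factorial `t^(d) = t (t-1) ⋯ (t-d+1)`. -/
def fall (t : ℝ) : ℕ → ℝ
  | 0 => 1
  | d + 1 => fall t d * (t - (d : ℝ))

/-- The regular grid `Δ(n,r) = {x ∈ Δ_n : r·x ∈ ℕ^n}`. -/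
def regularGrid (n r : ℕ) : Set (Fin n → ℝ) :=
  {x ∈ stdSimplex ℝ (Fin n) | ∀ i, ∃ k : ℕ, (r : ℝ) * x i = (k : ℝ)}

/-- `f_{Δ(n,r)}`, the minimum of `f` over the regular grid. -/
def minGrid (n r : ℕ) (f : (Fin n → ℝ) → ℝ) : ℝ :=
  sInf (f '' regularGrid n r)

/-- `f̲`, the minimum of `f` over the standard simplex. -/
def minSimplex (n : ℕ) (f : (Fin n → ℝ) → ℝ) : ℝ :=
  sInf (f '' stdSimplex ℝ (Fin n))

/-- `f̄`, the maximum of `f` over the standard simplex. -/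
def maxSimplex (n : ℕ) (f : (Fin n → ℝ) → ℝ) : ℝ :=
  sSup (f '' stdSimplex ℝ (Fin n))

/-- The quadratic form `f(x) = xᵀ Q x`. -/
def quadForm (n : ℕ) (Q : Matrix (Fin n) (Fin n) ℝ) (x : Fin n → ℝ) : ℝ :=
  ∑ i, ∑ j, Q i j * x i * x j

/-- The Pólya-type lower bound for the quadratic form `xᵀQx`:
`f_min^{(r-2)} = min_{α ∈ I(n,r)} [αᵀQα − Σ_i Q_ii α_i] / (r(r−1))`. -/
def quadPolya (n r : ℕ) (Q : Matrix (Fin n) (Fin n) ℝ) : ℝ :=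
  sInf ((fun α : Fin n → ℕ =>
      ((∑ i, ∑ j, Q i j * (α i : ℝ) * (α j : ℝ)) - ∑ i, Q i i * (α i : ℝ)) /
        ((r : ℝ) * ((r : ℝ) - 1))) ''
    {α : Fin n → ℕ | ∑ i, α i = r})

/-!
Writing `x = α / r` for `α ∈ I(n,r)`, the numerator of the Pólya bound is
`αᵀQα − Σ Q_ii α_i = r² f(x) − r Σ Q_ii x_i`. Here `f(x) ≥ f̲`, and `Σ Q_ii x_i` is a convex
combination of the values `Q_ii = f(e_i) ≤ f̄`. Hence every term of the minimum is at least
`(r f̲ − f̄) / (r − 1)`, which rearranges to the claim.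
-/

open Finset

variable {n : ℕ}

theorem minSimplex_le {f : (Fin n → ℝ) → ℝ} (hf : Continuous f) {x : Fin n → ℝ}
    (hx : x ∈ stdSimplex ℝ (Fin n)) : minSimplex n f ≤ f x :=
  csInf_le ((isCompact_stdSimplex _ _).image hf).bddBelow ⟨x, hx, rfl⟩

theorem le_maxSimplex {f : (Fin n → ℝ) → ℝ} (hf : Continuous f) {x : Fin n → ℝ}
    (hx : x ∈ stdSimplex ℝ (Fin n)) : f x ≤ maxSimplex n f :=
  le_csSup ((isCompact_stdSimplex _ _).image hf).bddAbove ⟨x, hx, rfl⟩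

theorem continuous_quadForm (Q : Matrix (Fin n) (Fin n) ℝ) : Continuous (quadForm n Q) := by
  unfold quadForm
  fun_prop

theorem quadForm_smul (Q : Matrix (Fin n) (Fin n) ℝ) (c : ℝ) (x : Fin n → ℝ) :
    quadForm n Q (c • x) = c ^ 2 * quadForm n Q x := by
  simp only [quadForm, Pi.smul_apply, smul_eq_mul, mul_sum]
  exact sum_congr rfl fun i _ => sum_congr rfl fun j _ => by ring

theorem quadForm_single (Q : Matrix (Fin n) (Fin n) ℝ) (i : Fin n) :
    quadForm n Q (Pi.single i 1) = Q i i := by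
  simp [quadForm, Pi.single_apply]

theorem sum_diag_mul_le_maxSimplex (Q : Matrix (Fin n) (Fin n) ℝ) {x : Fin n → ℝ}
    (hx : x ∈ stdSimplex ℝ (Fin n)) : ∑ i, Q i i * x i ≤ maxSimplex n (quadForm n Q) := by
  have hdiag (i : Fin n) : Q i i ≤ maxSimplex n (quadForm n Q) :=
    quadForm_single Q i ▸ le_maxSimplex (continuous_quadForm Q) (single_mem_stdSimplex ℝ i)
  calc ∑ i, Q i i * x i ≤ ∑ i, maxSimplex n (quadForm n Q) * x i :=
        sum_le_sum fun i _ => mul_le_mul_of_nonneg_right (hdiag i) (hx.1 i)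
    _ = maxSimplex n (quadForm n Q) := by rw [← mul_sum, hx.2, mul_one]

theorem inv_smul_natCast_mem_stdSimplex {r : ℕ} (hr : 0 < r) {α : Fin n → ℕ}
    (hα : ∑ i, α i = r) : (r : ℝ)⁻¹ • (fun i => (α i : ℝ)) ∈ stdSimplex ℝ (Fin n) := by
  refine ⟨fun i => ?_, ?_⟩ <;> simp only [Pi.smul_apply, smul_eq_mul, ← mul_sum]
  · positivity
  rw [← Nat.cast_sum, hα, inv_mul_cancel₀ (Nat.cast_ne_zero.mpr hr.ne')]

theorem mul_sub_maxSimplex_le_polya_numerator (Q : Matrix (Fin n) (Fin n) ℝ) {r : ℕ}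
    (hr : 0 < r) {α : Fin n → ℕ} (hα : ∑ i, α i = r) :
    (r : ℝ) * (r * minSimplex n (quadForm n Q) - maxSimplex n (quadForm n Q)) ≤
      (∑ i, ∑ j, Q i j * (α i : ℝ) * (α j : ℝ)) - ∑ i, Q i i * (α i : ℝ) := by
  set x := (r : ℝ)⁻¹ • (fun i => (α i : ℝ))
  have hx : x ∈ stdSimplex ℝ (Fin n) := inv_smul_natCast_mem_stdSimplex hr hα
  have hαx : (fun i => (α i : ℝ)) = (r : ℝ) • x := by
    rw [smul_inv_smul₀ (Nat.cast_ne_zero.mpr hr.ne')]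
  have hquad : ∑ i, ∑ j, Q i j * (α i : ℝ) * (α j : ℝ) = (r : ℝ) ^ 2 * quadForm n Q x := by
    rw [← quadForm_smul, ← hαx]
    rfl
  have hdiag : ∑ i, Q i i * (α i : ℝ) = r * ∑ i, Q i i * x i := by
    simp only [congrFun hαx, Pi.smul_apply, smul_eq_mul, mul_sum]
    exact sum_congr rfl fun i _ => by ring
  have hmin := minSimplex_le (continuous_quadForm Q) hx
  have hmax := sum_diag_mul_le_maxSimplex Q hx
  rw [hquad, hdiag]
  linarith [mul_le_mul_of_nonneg_left hmin (sq_nonneg (r : ℝ)),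
    mul_le_mul_of_nonneg_left hmax (Nat.cast_nonneg (α := ℝ) r)]

theorem div_le_quadPolya (hn : 0 < n) {r : ℕ} (hr : 2 ≤ r) (Q : Matrix (Fin n) (Fin n) ℝ) :
    ((r : ℝ) * minSimplex n (quadForm n Q) - maxSimplex n (quadForm n Q)) / ((r : ℝ) - 1) ≤
      quadPolya n r Q := by
  have hr1 : (1 : ℝ) < r := by exact_mod_cast hr
  refine le_csInf ⟨_, ⟨Pi.single ⟨0, hn⟩ r, by simp, rfl⟩⟩ ?_
  rintro _ ⟨α, hα, rfl⟩
  rw [div_le_div_iff₀ (by linarith) (by nlinarith), ← mul_assoc, mul_comm _ (r : ℝ)]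
  exact mul_le_mul_of_nonneg_right
    (mul_sub_maxSimplex_le_polya_numerator Q (by omega) hα) (by linarith)

theorem statement3_general (n r : ℕ) (hn : 0 < n) (hr : 2 ≤ r)
    (Q : Matrix (Fin n) (Fin n) ℝ) :
    minSimplex n (quadForm n Q) - quadPolya n r Q ≤
      (1 / ((r : ℝ) - 1)) * (maxSimplex n (quadForm n Q) - minSimplex n (quadForm n Q)) := by
  have hr1 : (0 : ℝ) < r - 1 := by
    have : (2 : ℝ) ≤ r := by exact_mod_cast hr
    linarith
  calc minSimplex n (quadForm n Q) - quadPolya n r Q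
      ≤ minSimplex n (quadForm n Q) -
          (r * minSimplex n (quadForm n Q) - maxSimplex n (quadForm n Q)) / (r - 1) := by
        linarith [div_le_quadPolya hn hr Q]
    _ = (1 / ((r : ℝ) - 1)) * (maxSimplex n (quadForm n Q) - minSimplex n (quadForm n Q)) := by
        field_simp
        ring

/-- for `f(x) = xᵀQx`, `Q` symmetric and `r ≥ 2`,
`f̲ − f_min^{(r−2)} ≤ (1/(r−1))(f̄ − f̲)`. -/
theorem statement3 (n r : ℕ) (hn : 0 < n) (hr : 2 ≤ r)
    (Q : Matrix (Fin n) (Fin n) ℝ) (hQ : Q.IsSymm) :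
    minSimplex n (quadForm n Q) - quadPolya n r Q ≤
      (1 / ((r : ℝ) - 1)) * (maxSimplex n (quadForm n Q) - minSimplex n (quadForm n Q)) :=
  statement3_general n r hn hr Q
end
end

section
/- Let f be a homogeneous cubic polynomial in n variables with real coefficients and let r ≥ 3 be an integer. Then f_{Δ(n,r)} − f̲ ≤ (4/r − 4/r^2) (f̄ − f̲). -/
open Finset

noncomputable section

/-- The homogeneous polynomial of degree `d` with coefficients `c`,
`f(x) = Σ_{β ∈ I(n,d)} c_β x^β`. -/
def homPoly (n d : ℕ) (c : (Fin n → ℕ) → ℝ) (x : Fin n → ℝ) : ℝ :=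
  ∑ β ∈ Finset.Nat.antidiagonalTuple n d, c β * ∏ i, x i ^ β i

/-- The Pólya-type lower bound
`f_min^{(r-d)} = min_{α ∈ I(n,r)} Σ_{β ∈ I(n,d)} c_β α^{(β)} / r^{(d)}`. -/
def polyaBound (n d r : ℕ) (c : (Fin n → ℕ) → ℝ) : ℝ :=
  sInf ((fun α : Fin n → ℕ =>
      (∑ β ∈ Finset.Nat.antidiagonalTuple n d,
        c β * ∏ i, fall ((α i : ℕ) : ℝ) (β i)) / fall (r : ℝ) d) ''
    {α : Fin n → ℕ | ∑ i, α i = r})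

/-!
Let `z` be a minimiser of `f` on `Δ_n` and let `α` be multinomially distributed with `r` trials and
cell probabilities `z`. Writing each power `α_i ^ β_i` in the falling-factorial basis (Stirling
numbers of the second kind) and using the factorial moments `E[∏ α_i^(k_i)] = r^(|k|) z^k`, one gets
`E[f(α)] = r C₁ + r (r - 1) C₂ + r (r - 1) (r - 2) f(z)` with `C₁`, `C₂` independent of `r`.
Since `α / r` lies on `Δ(n,r)` and `f(α) = r³ f(α / r)`, the case `r = 1` gives `f̲ ≤ C₁`, the case
`r = 2` gives `C₁ + C₂ ≤ 4 f̄`, and the general case gives `r³ f_{Δ(n,r)} ≤ E[f(α)]`; eliminating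
`C₁` and `C₂` yields the bound.
-/

lemma fall_natCast (n k : ℕ) : fall n k = n.descFactorial k := by
  induction k with
  | zero => simp [fall]
  | succ k ih =>
    rw [fall, ih, Nat.descFactorial_succ, mul_comm]
    rcases le_or_gt k n with h | h
    · push_cast [h]; rfl
    · simp [Nat.descFactorial_eq_zero_iff_lt.2 h]

lemma mul_fall (t : ℝ) (k : ℕ) : t * fall t k = fall t (k + 1) + k * fall t k := by
  rw [fall]; ring

lemma pow_eq_sum_stirlingSecond_mul_fall (t : ℝ) (b : ℕ) :
    t ^ b = ∑ k ∈ range (b + 1), (b.stirlingSecond k : ℝ) * fall t k := by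
  induction b with
  | zero => simp [fall]
  | succ b ih =>
    set g : ℕ → ℝ := fun k => k * b.stirlingSecond k * fall t k
    have hshift : ∑ k ∈ range (b + 1), g k = ∑ k ∈ range (b + 1), g (k + 1) := by
      have := sum_range_succ' g (b + 1)
      rw [sum_range_succ] at this
      simpa [g, Nat.stirlingSecond_eq_zero_of_lt (Nat.lt_succ_self b)] using this
    calc t ^ (b + 1)
        = ∑ k ∈ range (b + 1), (b.stirlingSecond k * fall t (k + 1) + g k) := by
          rw [pow_succ', ih, mul_sum]
          refine sum_congr rfl fun k _ => ?_
          rw [mul_left_comm, mul_fall]; ring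
      _ = ∑ k ∈ range (b + 1), (b.stirlingSecond k * fall t (k + 1) + g (k + 1)) := by
          rw [sum_add_distrib, sum_add_distrib, hshift]
      _ = _ := by
          rw [sum_range_succ' _ (b + 1)]
          simp only [Nat.stirlingSecond_succ_succ, Nat.stirlingSecond_succ_zero, Nat.cast_zero,
            zero_mul, add_zero]
          exact sum_congr rfl fun k _ => by push_cast [g]; ring

section Multinomial

open Nat

variable {ι : Type*} [Fintype ι]

lemma multinomial_mul_prod_descFactorial {α d : ι → ℕ} (h : d ≤ α) :
    multinomial univ α * ∏ i, (α i).descFactorial (d i) =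
      (∑ i, α i).descFactorial (∑ i, d i) * multinomial univ (α - d) := by
  refine Nat.eq_of_mul_eq_mul_right (prod_pos (s := univ) fun i _ => factorial_pos (α i - d i)) ?_
  have hsum : ∑ i, (α - d) i = ∑ i, α i - ∑ i, d i := sum_tsub_distrib _ fun i _ => h i
  calc (multinomial univ α * ∏ i, (α i).descFactorial (d i)) * ∏ i, (α i - d i)!
      = (∏ i, (α i)!) * multinomial univ α := by
        rw [mul_assoc, ← prod_mul_distrib, mul_comm]
        congr 1
        exact prod_congr rfl fun i _ => by rw [mul_comm, factorial_mul_descFactorial (h i)]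
    _ = (∑ i, α i - ∑ i, d i)! * (∑ i, α i).descFactorial (∑ i, d i) := by
        rw [multinomial_spec, factorial_mul_descFactorial (sum_le_sum fun i _ => h i)]
    _ = _ := by
        rw [← hsum, ← multinomial_spec]
        simp only [Pi.sub_apply]
        ring

lemma prod_descFactorial_eq_zero_of_not_le {α d : ι → ℕ} (h : ¬ d ≤ α) :
    ∏ i, (α i).descFactorial (d i) = 0 := by
  obtain ⟨i, hi⟩ : ∃ i, α i < d i := by simpa [Pi.le_def] using h
  exact prod_eq_zero (mem_univ i) (descFactorial_eq_zero_iff_lt.2 hi)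

variable [DecidableEq ι]

def multinomialMean (x : ι → ℝ) (r : ℕ) (g : (ι → ℕ) → ℝ) : ℝ :=
  ∑ α ∈ piAntidiag univ r, (multinomial univ α : ℝ) * (∏ i, x i ^ α i) * g α

variable {x : ι → ℝ} {r : ℕ}

lemma multinomialMean_const (hx : ∑ i, x i = 1) (a : ℝ) :
    multinomialMean x r (fun _ => a) = a := by
  rw [multinomialMean, ← sum_mul, ← sum_pow_eq_sum_piAntidiag, hx, one_pow, one_mul]

lemma multinomialMean_mono (hx₀ : ∀ i, 0 ≤ x i) {g h : (ι → ℕ) → ℝ}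
    (hgh : ∀ α ∈ piAntidiag univ r, g α ≤ h α) : multinomialMean x r g ≤ multinomialMean x r h :=
  sum_le_sum fun α hα => mul_le_mul_of_nonneg_left (hgh α hα)
    (mul_nonneg (Nat.cast_nonneg _) (prod_nonneg fun i _ => pow_nonneg (hx₀ i) _))

lemma multinomialMean_le (hx₀ : ∀ i, 0 ≤ x i) (hx : ∑ i, x i = 1) {g : (ι → ℕ) → ℝ} {a : ℝ}
    (h : ∀ α ∈ piAntidiag univ r, g α ≤ a) : multinomialMean x r g ≤ a :=
  multinomialMean_const hx a ▸ multinomialMean_mono hx₀ h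

lemma le_multinomialMean (hx₀ : ∀ i, 0 ≤ x i) (hx : ∑ i, x i = 1) {g : (ι → ℕ) → ℝ} {a : ℝ}
    (h : ∀ α ∈ piAntidiag univ r, a ≤ g α) : a ≤ multinomialMean x r g :=
  multinomialMean_const hx a ▸ multinomialMean_mono hx₀ h

lemma multinomialMean_prod_fall (hx : ∑ i, x i = 1) (d : ι → ℕ) :
    multinomialMean x r (fun α => ∏ i, fall (α i) (d i)) = fall r (∑ i, d i) * ∏ i, x i ^ d i := by
  simp only [multinomialMean, fall_natCast, ← Nat.cast_prod]
  rcases lt_or_ge r (∑ i, d i) with hlt | hle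
  · rw [descFactorial_eq_zero_iff_lt.2 hlt, cast_zero, zero_mul]
    refine sum_eq_zero fun α hα => ?_
    have hd : ¬ d ≤ α := fun hdα =>
      hlt.not_ge ((mem_piAntidiag.1 hα).1 ▸ sum_le_sum fun i _ => hdα i)
    rw [prod_descFactorial_eq_zero_of_not_le hd, cast_zero, mul_zero]
  have hsub : (piAntidiag univ (r - ∑ i, d i)).map (addRightEmbedding d) ⊆ piAntidiag univ r := by
    intro α hα
    obtain ⟨k, hk, rfl⟩ := mem_map.1 hα
    simp only [mem_piAntidiag, mem_univ, implies_true, and_true] at hk ⊢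
    simp [sum_add_distrib, hk, hle]
  rw [← sum_subset hsub, sum_map]
  · calc ∑ k ∈ piAntidiag univ (r - ∑ i, d i), _
        = ∑ k ∈ piAntidiag univ (r - ∑ i, d i),
            ((r.descFactorial (∑ i, d i) : ℝ) * ∏ i, x i ^ d i) *
              ((multinomial univ k : ℝ) * ∏ i, x i ^ k i) := by
          refine sum_congr rfl fun k hk => ?_
          have hmult := multinomial_mul_prod_descFactorial (le_add_self (a := d) (b := k))
          have hr : ∑ i, (k + d) i = r := (mem_piAntidiag.1 (hsub (mem_map_of_mem _ hk))).1
          rw [add_tsub_cancel_right, hr] at hmult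
          have hmult' : (multinomial univ (k + d) : ℝ) *
              ∏ i, ((k i + d i).descFactorial (d i) : ℕ) =
              r.descFactorial (∑ i, d i) * multinomial univ k := by exact_mod_cast hmult
          simp only [addRightEmbedding_apply, Pi.add_apply, pow_add, prod_mul_distrib]
          linear_combination (∏ i, x i ^ k i) * (∏ i, x i ^ d i) * hmult'
      _ = _ := by rw [← mul_sum, ← sum_pow_eq_sum_piAntidiag, hx, one_pow, mul_one]
  · intro α hα hnot
    have hd : ¬ d ≤ α := fun hdα => hnot <| mem_map.2 ⟨α - d, by
      simp only [mem_piAntidiag, mem_univ, implies_true, and_true] at hα ⊢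
      rw [← hα, ← sum_tsub_distrib _ fun i _ => hdα i]; rfl, by ext i; simp [hdα i]⟩
    rw [prod_descFactorial_eq_zero_of_not_le hd, cast_zero, mul_zero]

lemma multinomialMean_sum_mul {κ : Type*} (s : Finset κ) (a : κ → ℝ) (g : κ → (ι → ℕ) → ℝ) :
    multinomialMean x r (fun α => ∑ k ∈ s, a k * g k α) =
      ∑ k ∈ s, a k * multinomialMean x r (g k) := by
  simp only [multinomialMean, mul_sum, sum_comm (s := piAntidiag univ r) (t := s)]
  exact sum_congr rfl fun k _ => sum_congr rfl fun α _ => by ring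

lemma multinomialMean_prod_pow (hx : ∑ i, x i = 1) (β : ι → ℕ) :
    multinomialMean x r (fun α => ∏ i, (α i : ℝ) ^ β i) =
      ∑ k ∈ Fintype.piFinset fun i => range (β i + 1),
        (∏ i, ((β i).stirlingSecond (k i) : ℝ)) * fall r (∑ i, k i) * ∏ i, x i ^ k i := by
  have hexpand : (fun α : ι → ℕ => ∏ i, (α i : ℝ) ^ β i) = fun α =>
      ∑ k ∈ Fintype.piFinset fun i => range (β i + 1),
        (∏ i, ((β i).stirlingSecond (k i) : ℝ)) * ∏ i, fall (α i) (k i) := by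
    funext α
    simp only [pow_eq_sum_stirlingSecond_mul_fall, prod_univ_sum, prod_mul_distrib]
  rw [hexpand, multinomialMean_sum_mul]
  simp only [multinomialMean_prod_fall hx, mul_assoc]

end Multinomial

section HomogeneousPolynomial

def fallCoeff (n d : ℕ) (c : (Fin n → ℕ) → ℝ) (j : ℕ) (x : Fin n → ℝ) : ℝ :=
  ∑ β ∈ Finset.Nat.antidiagonalTuple n d, c β *
    ∑ k ∈ Fintype.piFinset (fun i => range (β i + 1)) with ∑ i, k i = j,
      (∏ i, ((β i).stirlingSecond (k i) : ℝ)) * ∏ i, x i ^ k i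

variable {n d : ℕ} (c : (Fin n → ℕ) → ℝ)

lemma multinomialMean_homPoly {x : Fin n → ℝ} (hx : ∑ i, x i = 1) (r : ℕ) :
    multinomialMean x r (fun α => homPoly n d c (fun i => α i)) =
      ∑ j ∈ range (d + 1), fall r j * fallCoeff n d c j x := by
  simp only [homPoly, fallCoeff, mul_sum]
  rw [multinomialMean_sum_mul, sum_comm]
  refine sum_congr rfl fun β hβ => ?_
  have hmaps : ∀ k ∈ Fintype.piFinset fun i => range (β i + 1), ∑ i, k i ∈ range (d + 1) := by
    intro k hk
    rw [mem_range, Nat.lt_succ_iff, ← (Finset.Nat.mem_antidiagonalTuple.1 hβ)]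
    exact sum_le_sum fun i _ => Nat.lt_succ_iff.1 (mem_range.1 (Fintype.mem_piFinset.1 hk i))
  rw [multinomialMean_prod_pow hx, ← sum_fiberwise_of_maps_to hmaps, mul_sum]
  refine sum_congr rfl fun j _ => ?_
  rw [mul_sum]
  refine sum_congr rfl fun k hk => ?_
  rw [(mem_filter.1 hk).2]
  ring

lemma fallCoeff_self (x : Fin n → ℝ) : fallCoeff n d c d x = homPoly n d c x := by
  refine sum_congr rfl fun β hβ => ?_
  have hβd : ∑ i, β i = d := Finset.Nat.mem_antidiagonalTuple.1 hβ
  have hfiber : {k ∈ Fintype.piFinset (fun i => range (β i + 1)) | ∑ i, k i = d} = {β} := by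
    ext k
    simp only [mem_filter, Fintype.mem_piFinset, mem_range, Nat.lt_succ_iff, mem_singleton]
    refine ⟨fun ⟨hle, hk⟩ => funext fun i => ?_, fun h => ⟨fun i => h ▸ le_rfl, h ▸ hβd⟩⟩
    exact (sum_eq_sum_iff_of_le fun i _ => hle i).1 (hk.trans hβd.symm) i (mem_univ i)
  simp [hfiber, Nat.stirlingSecond_self]

lemma fallCoeff_zero (hd : d ≠ 0) (x : Fin n → ℝ) : fallCoeff n d c 0 x = 0 := by
  refine sum_eq_zero fun β hβ => ?_
  obtain ⟨i, hi⟩ : ∃ i, β i ≠ 0 := by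
    by_contra! h
    exact hd (by simpa [h] using (Finset.Nat.mem_antidiagonalTuple.1 hβ).symm)
  refine mul_eq_zero_of_right _ (sum_eq_zero fun k hk => ?_)
  have hki : k i = 0 := (sum_eq_zero_iff.1 (mem_filter.1 hk).2) i (mem_univ i)
  obtain ⟨b, hb⟩ := Nat.exists_eq_succ_of_ne_zero hi
  rw [prod_eq_zero (mem_univ i) (by rw [hki, hb, Nat.stirlingSecond_succ_zero, Nat.cast_zero]),
    zero_mul]

lemma homPoly_smul (t : ℝ) (x : Fin n → ℝ) :
    homPoly n d c (t • x) = t ^ d * homPoly n d c x := by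
  simp only [homPoly, mul_sum]
  refine sum_congr rfl fun β hβ => ?_
  simp only [Pi.smul_apply, smul_eq_mul, mul_pow, prod_mul_distrib, prod_pow_eq_pow_sum,
    Finset.Nat.mem_antidiagonalTuple.1 hβ]
  ring

lemma multinomialMean_homPoly_three {x : Fin n → ℝ} (hx : ∑ i, x i = 1) (r : ℕ) :
    multinomialMean x r (fun α => homPoly n 3 c (fun i => α i)) =
      r * fallCoeff n 3 c 1 x + r * (r - 1) * fallCoeff n 3 c 2 x +
        r * (r - 1) * (r - 2) * homPoly n 3 c x := by
  rw [multinomialMean_homPoly c hx, sum_range_succ, sum_range_succ, sum_range_succ, sum_range_one,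
    fallCoeff_zero c three_ne_zero, fallCoeff_self]
  simp only [fall]
  ring

lemma continuous_homPoly : Continuous (homPoly n d c) := by
  unfold homPoly
  fun_prop

end HomogeneousPolynomial

section Grid

variable {n d r : ℕ} (c : (Fin n → ℕ) → ℝ)

lemma div_mem_regularGrid (hr : r ≠ 0) {α : Fin n → ℕ} (hα : α ∈ piAntidiag univ r) :
    (fun i => (α i : ℝ) / r) ∈ regularGrid n r := by
  have hr' : (r : ℝ) ≠ 0 := Nat.cast_ne_zero.2 hr
  refine ⟨⟨fun i => by positivity, ?_⟩, fun i => ⟨α i, by field_simp⟩⟩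
  rw [← sum_div, ← Nat.cast_sum, (mem_piAntidiag.1 hα).1, div_self hr']

lemma homPoly_natCast (hr : r ≠ 0) (α : Fin n → ℕ) :
    homPoly n d c (fun i => α i) = r ^ d * homPoly n d c (fun i => α i / r) := by
  rw [← homPoly_smul]
  congr 1
  ext i
  simp [mul_div_cancel₀ _ (Nat.cast_ne_zero.2 hr : (r : ℝ) ≠ 0)]

lemma multinomialMean_homPoly_le {x : Fin n → ℝ} (hx : x ∈ stdSimplex ℝ (Fin n)) (hr : r ≠ 0)
    {a : ℝ} (h : ∀ y ∈ regularGrid n r, homPoly n d c y ≤ a) :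
    multinomialMean x r (fun α => homPoly n d c (fun i => α i)) ≤ r ^ d * a :=
  multinomialMean_le hx.1 hx.2 fun α hα => by
    rw [homPoly_natCast c hr]
    exact mul_le_mul_of_nonneg_left (h _ (div_mem_regularGrid hr hα)) (by positivity)

lemma le_multinomialMean_homPoly {x : Fin n → ℝ} (hx : x ∈ stdSimplex ℝ (Fin n)) (hr : r ≠ 0)
    {a : ℝ} (h : ∀ y ∈ regularGrid n r, a ≤ homPoly n d c y) :
    r ^ d * a ≤ multinomialMean x r (fun α => homPoly n d c (fun i => α i)) :=
  le_multinomialMean hx.1 hx.2 fun α hα => by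
    rw [homPoly_natCast c hr]
    exact mul_le_mul_of_nonneg_left (h _ (div_mem_regularGrid hr hα)) (by positivity)

end Grid

lemma grid_gap_le {r m M G C₁ C₂ : ℝ} (hr : 2 ≤ r) (h₁ : m ≤ C₁) (h₂ : 2 * C₁ + 2 * C₂ ≤ 8 * M)
    (h₃ : r ^ 3 * G ≤ r * C₁ + r * (r - 1) * C₂ + r * (r - 1) * (r - 2) * m) :
    G - m ≤ (4 / r - 4 / r ^ 2) * (M - m) := by
  have hr0 : 0 < r := by linarith
  have hC₂ : r * (r - 1) * C₂ ≤ r * (r - 1) * (4 * M - C₁) :=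
    mul_le_mul_of_nonneg_left (by linarith) (by nlinarith)
  have hC₁ : r * (r - 2) * m ≤ r * (r - 2) * C₁ := mul_le_mul_of_nonneg_left h₁ (by nlinarith)
  rw [← sub_nonneg]
  have hscaled : 0 ≤ r ^ 3 * ((4 / r - 4 / r ^ 2) * (M - m) - (G - m)) := by
    field_simp
    nlinarith
  exact (mul_nonneg_iff_of_pos_left (by positivity)).1 hscaled

/-- for `f` homogeneous cubic and `r ≥ 3`,
`f_{Δ(n,r)} − f̲ ≤ (4/r − 4/r²)(f̄ − f̲)`. -/
theorem statement8 (n r : ℕ) (hn : 0 < n) (hr : 3 ≤ r) (c : (Fin n → ℕ) → ℝ) :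
    minGrid n r (homPoly n 3 c) - minSimplex n (homPoly n 3 c) ≤
      (4 / (r : ℝ) - 4 / (r : ℝ) ^ 2) *
        (maxSimplex n (homPoly n 3 c) - minSimplex n (homPoly n 3 c)) := by
  set f := homPoly n 3 c
  obtain ⟨z, hz, hzmin⟩ := (isCompact_stdSimplex ℝ (Fin n)).exists_isMinOn
    ⟨_, single_mem_stdSimplex ℝ (⟨0, hn⟩ : Fin n)⟩ (continuous_homPoly c).continuousOn
  replace hzmin := isMinOn_iff.1 hzmin
  have hmin : minSimplex n f = f z :=
    IsLeast.csInf_eq ⟨Set.mem_image_of_mem f hz, Set.forall_mem_image.2 hzmin⟩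
  have hmax : ∀ y ∈ stdSimplex ℝ (Fin n), f y ≤ maxSimplex n f := fun y hy =>
    le_csSup ((isCompact_stdSimplex ℝ (Fin n)).bddAbove_image
      (continuous_homPoly c).continuousOn) (Set.mem_image_of_mem f hy)
  have hgrid : ∀ y ∈ regularGrid n r, minGrid n r f ≤ f y := fun y hy =>
    csInf_le ⟨f z, Set.forall_mem_image.2 fun y hy => hzmin y hy.1⟩ (Set.mem_image_of_mem f hy)
  have hmean := multinomialMean_homPoly_three c hz.2
  have h₁ := le_multinomialMean_homPoly c hz one_ne_zero fun y hy => hzmin y hy.1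
  have h₂ := multinomialMean_homPoly_le c hz two_ne_zero fun y hy => hmax y hy.1
  have h₃ := le_multinomialMean_homPoly c hz (by omega : r ≠ 0) hgrid
  rw [hmean] at h₁ h₂ h₃
  rw [hmin]
  refine grid_gap_le (by exact_mod_cast (by omega : 2 ≤ r)) ?_ ?_ h₃
  · norm_num at h₁; linarith
  · norm_num at h₂; linarith
end
end
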